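/- Let L be a Moufang loop of class at most 2 (every commutator and associator of L lies in the center Z(L)). Then for all c, d, e, f ∈ L the pentagonal (five-cycle) identity holds: [cd,e,f] = [c,d,e]·[c,de,f]·[d,e,f]·[c,d,ef]⁻¹. -/

import Mathlib

/-- An inverse property loop: a set with multiplication, identity, and two-sided
inverses satisfying `a⁻¹(ax) = x = (xa)a⁻¹`. -/
class IPLoop (L : Type*) extends Mul L, One L, Inv L where
  one_mul : ∀ a : L, 1 * a = a
  mul_one : ∀ a : L, a * 1 = a
  inv_mul_cancel_left : ∀ a x : L, a⁻¹ * (a * x) = x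
  mul_inv_cancel_right : ∀ a x : L, (x * a) * a⁻¹ = x

namespace IPLoop

variable {L : Type*} [IPLoop L]

/-- Powers with natural number exponent, `c^(n+1) = c * c^n`. -/
def npow (c : L) : ℕ → L
  | 0 => 1
  | n + 1 => c * npow c n

instance : Pow L ℕ := ⟨npow⟩

/-- Powers with integer exponent. -/
def zpow (c : L) : ℤ → L
  | Int.ofNat n => c ^ n
  | Int.negSucc n => (c ^ (n + 1))⁻¹

instance : Pow L ℤ := ⟨zpow⟩

/-- The commutator `[c,d] = (dc)⁻¹(cd)`. -/
def comm (c d : L) : L := (d * c)⁻¹ * (c * d)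

/-- The associator `[c,d,e] = (c(de))⁻¹((cd)e)`. -/
def assoc (c d e : L) : L := (c * (d * e))⁻¹ * ((c * d) * e)

/-- Membership in the center `Z(L)`. -/
def inCenter (z : L) : Prop :=
  (∀ x : L, comm z x = 1) ∧
  ∀ x y : L, assoc z x y = 1 ∧ assoc x z y = 1 ∧ assoc x y z = 1

/-- The Moufang identity `((dc)e)c = d(c(ec))`. -/
def IsMoufang (L : Type*) [IPLoop L] : Prop :=
  ∀ c d e : L, ((d * c) * e) * c = d * (c * (e * c))

/-- A loop is of (central nilpotence) class at most 2 if every commutator and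
every associator lies in the center. -/
def ClassTwo (L : Type*) [IPLoop L] : Prop :=
  (∀ c d : L, inCenter (comm c d)) ∧ ∀ c d e : L, inCenter (assoc c d e)

/-- The order of an element: least `n > 0` with `c^n = 1` (or `0` if none). -/
noncomputable def ordOf (c : L) : ℕ := sInf {n : ℕ | 0 < n ∧ c ^ n = 1}

/-- The subloop generated by a subset `S`. -/
def subloopClosure (S : Set L) : Set L :=
  ⋂₀ {T : Set L | (1 : L) ∈ T ∧ (∀ x ∈ T, x⁻¹ ∈ T) ∧
      (∀ x ∈ T, ∀ y ∈ T, x * y ∈ T) ∧ S ⊆ T}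

end IPLoop

/-!
Rebracketing `((cd)e)f` into `c(d(ef))` along the two sides of Mac Lane's pentagon produces the
associators `[cd,e,f], [c,d,ef]` on one side and `[c,d,e], [c,de,f], [d,e,f]` on the other; since
they are central they can be pushed to the right and collected, so cancelling `c(d(ef))` leaves
`[c,d,ef][cd,e,f] = [c,d,e][c,de,f][d,e,f]`.
-/

namespace IPLoop

variable {L : Type*} [IPLoop L]

theorem inv_mul_self (a : L) : a⁻¹ * a = 1 := by
  simpa only [IPLoop.mul_one] using inv_mul_cancel_left a 1

protected theorem inv_inv (a : L) : a⁻¹⁻¹ = a := by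
  simpa only [inv_mul_self, IPLoop.mul_one] using inv_mul_cancel_left a⁻¹ a

protected theorem mul_inv_cancel_left (a x : L) : a * (a⁻¹ * x) = x := by
  simpa only [IPLoop.inv_inv] using inv_mul_cancel_left a⁻¹ x

protected theorem mul_left_cancel {a x y : L} (h : a * x = a * y) : x = y := by
  rw [← inv_mul_cancel_left a x, h, inv_mul_cancel_left]

theorem eq_mul_inv_of_mul_eq {a x y : L} (h : x * a = y) : x = y * a⁻¹ := by
  rw [← h, mul_inv_cancel_right]

theorem mul_mul_eq_mul_mul_assoc (x y z : L) : (x * y) * z = (x * (y * z)) * assoc x y z :=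
  (IPLoop.mul_inv_cancel_left _ _).symm

theorem mul_assoc_of_assoc_eq_one {x y z : L} (h : assoc x y z = 1) :
    (x * y) * z = x * (y * z) := by
  rw [mul_mul_eq_mul_mul_assoc, h, IPLoop.mul_one]

namespace inCenter

variable {z : L}

protected theorem mul_comm (hz : inCenter z) (x : L) : z * x = x * z := by
  apply IPLoop.mul_left_cancel (a := (x * z)⁻¹)
  rw [inv_mul_self]
  exact hz.1 x

theorem mul_assoc_mid (hz : inCenter z) (x y : L) : (x * z) * y = x * (z * y) :=
  mul_assoc_of_assoc_eq_one (hz.2 x y).2.1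

theorem mul_assoc_right (hz : inCenter z) (x y : L) : (x * y) * z = x * (y * z) :=
  mul_assoc_of_assoc_eq_one (hz.2 x y).2.2

protected theorem mul_right_comm (hz : inCenter z) (x y : L) : (x * z) * y = (x * y) * z := by
  rw [hz.mul_assoc_mid, hz.mul_comm, ← hz.mul_assoc_right]

end inCenter

theorem assoc_mul_left_eq (hA : ∀ x y z : L, inCenter (assoc x y z)) (c d e f : L) :
    assoc (c * d) e f =
      ((assoc c d e * assoc c (d * e) f) * assoc d e f) * (assoc c d (e * f))⁻¹ := by
  apply eq_mul_inv_of_mul_eq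
  set X := c * (d * (e * f))
  set A₁ := assoc c d e
  set A₂ := assoc c (d * e) f
  set A₃ := assoc d e f
  set A₄ := assoc c d (e * f)
  set A₅ := assoc (c * d) e f
  have via_cd_ef : ((c * d) * e) * f = X * (A₄ * A₅) := by
    rw [mul_mul_eq_mul_mul_assoc (c * d), mul_mul_eq_mul_mul_assoc c d, (hA _ _ _).mul_assoc_mid]
  have via_de : ((c * d) * e) * f = X * ((A₃ * A₂) * A₁) := by
    rw [mul_mul_eq_mul_mul_assoc c d e, (hA _ _ _).mul_right_comm,
      mul_mul_eq_mul_mul_assoc c (d * e), mul_mul_eq_mul_mul_assoc d e,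
      ← (hA _ _ _).mul_assoc_right c, (hA _ _ _).mul_assoc_mid X, (hA _ _ _).mul_assoc_right X]
  have key : A₄ * A₅ = (A₃ * A₂) * A₁ := IPLoop.mul_left_cancel (via_cd_ef.symm.trans via_de)
  calc A₅ * A₄ = A₄ * A₅ := ((hA _ _ _).mul_comm A₅).symm
    _ = (A₃ * A₂) * A₁ := key
    _ = A₁ * (A₂ * A₃) := by rw [← (hA c d e).mul_comm, (hA d e f).mul_comm A₂]
    _ = (A₁ * A₂) * A₃ := ((hA _ _ _).mul_assoc_right A₁ A₂).symm

end IPLoop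

open IPLoop in
theorem stmt1_general {L : Type*} [IPLoop L] (h2 : ClassTwo L)
    (c d e f : L) :
    assoc (c * d) e f =
      ((assoc c d e * assoc c (d * e) f) * assoc d e f) * (assoc c d (e * f))⁻¹ :=
  assoc_mul_left_eq h2.2 c d e f

open IPLoop in
/-- The pentagonal (five-cycle) identity
`[cd,e,f] = [c,d,e]·[c,de,f]·[d,e,f]·[c,d,ef]⁻¹` in a Moufang loop of class
at most 2. -/
theorem stmt1 {L : Type*} [IPLoop L] (hM : IsMoufang L) (h2 : ClassTwo L)
    (c d e f : L) :
    assoc (c * d) e f =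
      ((assoc c d e * assoc c (d * e) f) * assoc d e f) * (assoc c d (e * f))⁻¹ :=
  stmt1_general h2 c d e f
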